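/- Let φ, ψ be scale functions satisfying LU(β₁,β₂) and LU(γ₁,γ₂) respectively, and set μ(t) := 1/ψ(φ⁻¹(t)). Then the Bernstein function φ̄(λ) := ∫₀^∞ (1 - e^{-λt}) μ(t) dt/t satisfies φ̄(λ) ≤ C λ ∫₀^∞ e^{-λ s} μ(s) ds for all λ > 0, for some constant C depending only on the LU constants. -/

import Mathlib

open Real Set MeasureTheory

/-- A scale function satisfying `LU(α₁, α₂)`. -/
def LU (α₁ α₂ : ℝ) (ψ : ℝ → ℝ) : Prop :=
  ContinuousOn ψ (Ici 0) ∧ StrictMonoOn ψ (Ici 0) ∧ ψ 0 = 0 ∧ ψ 1 = 1 ∧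
    ∃ C : ℝ, 1 ≤ C ∧ ∀ r R : ℝ, 0 < r → r ≤ R →
      C⁻¹ * (R / r) ^ α₁ ≤ ψ R / ψ r ∧ ψ R / ψ r ≤ C * (R / r) ^ α₂

/-! For `s ≤ t` the LU bounds give `μ(t) ≤ K μ(s) (s/t)^(γ₁/β₂)` for `μ = 1/(ψ ∘ φ⁻¹)`, hence
`∫ₛ^∞ μ(t) dt/t ≤ (K β₂/γ₁) μ(s)`. Writing `1 - e^{-λt} = λ ∫₀ᵗ e^{-λs} ds` and exchanging the
order of integration over `{0 < s < t}` gives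
`φ̄(λ) = λ ∫₀^∞ e^{-λs} ∫ₛ^∞ μ(t) dt/t ds ≤ (K β₂/γ₁) λ ∫₀^∞ e^{-λs} μ(s) ds`. -/

open Filter

namespace LU

variable {α₁ α₂ : ℝ} {φ : ℝ → ℝ}

lemma pos (h : LU α₁ α₂ φ) {r : ℝ} (hr : 0 < r) : 0 < φ r := by
  simpa [h.2.2.1] using h.2.1 self_mem_Ici (mem_Ici.2 hr.le) hr

lemma tendsto_atTop (h : LU α₁ α₂ φ) (hα₁ : 0 < α₁) : Tendsto φ atTop atTop := by
  obtain ⟨C, hC, hCφ⟩ := h.2.2.2.2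
  refine tendsto_atTop_mono' atTop ?_
    ((tendsto_rpow_atTop hα₁).const_mul_atTop (inv_pos.2 (zero_lt_one.trans_le hC)))
  filter_upwards [eventually_ge_atTop 1] with R hR
  simpa [h.2.2.2.1] using (hCφ 1 R one_pos hR).1

lemma surjOn_Ici (h : LU α₁ α₂ φ) (hα₁ : 0 < α₁) : SurjOn φ (Ici 0) (Ici 0) := by
  intro t ht
  obtain ⟨R, htR, hR⟩ :=
    (((h.tendsto_atTop hα₁).eventually_ge_atTop t).and (eventually_ge_atTop 0)).exists
  obtain ⟨r, hr, rfl⟩ :=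
    intermediate_value_Icc hR (h.1.mono Icc_subset_Ici_self) ⟨by rwa [h.2.2.1], htR⟩
  exact ⟨r, hr.1, rfl⟩

variable {φinv : ℝ → ℝ}

lemma mapsTo_Ioi_of_rightInvOn (h : LU α₁ α₂ φ) (hmaps : MapsTo φinv (Ici 0) (Ici 0))
    (hinv : RightInvOn φinv φ (Ici 0)) : MapsTo φinv (Ioi 0) (Ioi 0) := by
  intro t ht
  have ht₀ : t ∈ Ici 0 := mem_Ici.2 (le_of_lt ht)
  refine (mem_Ici.1 (hmaps ht₀)).lt_of_ne' fun h0 => (mem_Ioi.1 ht).ne ?_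
  rw [← hinv ht₀, h0, h.2.2.1]

lemma monotoneOn_of_rightInvOn (h : LU α₁ α₂ φ) (hmaps : MapsTo φinv (Ici 0) (Ici 0))
    (hinv : RightInvOn φinv φ (Ici 0)) : MonotoneOn φinv (Ici 0) := by
  intro s hs t ht hst
  rwa [← h.2.1.le_iff_le (hmaps hs) (hmaps ht), hinv hs, hinv ht]

end LU

section Composition

variable {β₁ β₂ γ₁ γ₂ : ℝ} {φ ψ : ℝ → ℝ}

lemma LU.rpow_div_le_mul_div (hφ : LU β₁ β₂ φ) (hψ : LU γ₁ γ₂ ψ) (hβ₂ : 0 < β₂)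
    (hγ₁ : 0 ≤ γ₁) :
    ∃ K, 0 < K ∧ ∀ a b, 0 < a → a ≤ b → (φ b / φ a) ^ (γ₁ / β₂) ≤ K * (ψ b / ψ a) := by
  obtain ⟨Cφ, hCφ, hφ_scale⟩ := hφ.2.2.2.2
  obtain ⟨Cψ, hCψ, hψ_scale⟩ := hψ.2.2.2.2
  have hCφ₀ : 0 < Cφ := zero_lt_one.trans_le hCφ
  have hCψ₀ : 0 < Cψ := zero_lt_one.trans_le hCψ
  refine ⟨Cφ ^ (γ₁ / β₂) * Cψ, by positivity, fun a b ha hab => ?_⟩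
  have hb : 0 < b := ha.trans_le hab
  calc (φ b / φ a) ^ (γ₁ / β₂) ≤ (Cφ * (b / a) ^ β₂) ^ (γ₁ / β₂) :=
        rpow_le_rpow (div_pos (hφ.pos hb) (hφ.pos ha)).le (hφ_scale a b ha hab).2
          (by positivity)
    _ = Cφ ^ (γ₁ / β₂) * (b / a) ^ γ₁ := by
        rw [mul_rpow hCφ₀.le (by positivity), ← rpow_mul (by positivity),
          mul_div_cancel₀ _ hβ₂.ne']
    _ ≤ Cφ ^ (γ₁ / β₂) * (Cψ * (ψ b / ψ a)) := by
        gcongr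
        exact (inv_mul_le_iff₀ hCψ₀).1 (hψ_scale a b ha hab).1
    _ = Cφ ^ (γ₁ / β₂) * Cψ * (ψ b / ψ a) := by ring

lemma LU.inv_comp_le_mul_rpow {φinv : ℝ → ℝ} (hφ : LU β₁ β₂ φ) (hψ : LU γ₁ γ₂ ψ)
    (hβ₂ : 0 < β₂) (hγ₁ : 0 ≤ γ₁) (hmaps : MapsTo φinv (Ioi 0) (Ioi 0))
    (hmono : MonotoneOn φinv (Ioi 0)) (hinv : RightInvOn φinv φ (Ioi 0)) :
    ∃ K, 0 < K ∧ ∀ s t, 0 < s → s ≤ t →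
      (ψ (φinv t))⁻¹ ≤ K * (ψ (φinv s))⁻¹ * (s / t) ^ (γ₁ / β₂) := by
  obtain ⟨K, hK, hK_scale⟩ := hφ.rpow_div_le_mul_div hψ hβ₂ hγ₁
  refine ⟨K, hK, fun s t hs hst => ?_⟩
  have ht : 0 < t := hs.trans_le hst
  have hψb : 0 < ψ (φinv t) := hψ.pos (hmaps ht)
  have hψa : 0 < ψ (φinv s) := hψ.pos (hmaps hs)
  have key := hK_scale _ _ (hmaps hs) (hmono hs ht hst)
  rw [hinv hs, hinv ht] at key
  rw [← inv_div t s, inv_rpow (by positivity), le_mul_inv_iff₀ (by positivity)]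
  calc (ψ (φinv t))⁻¹ * (t / s) ^ (γ₁ / β₂)
      ≤ (ψ (φinv t))⁻¹ * (K * (ψ (φinv t) / ψ (φinv s))) := by gcongr
    _ = K * (ψ (φinv s))⁻¹ := by field_simp

end Composition

lemma lintegral_Ioi_div_le_of_decay {μ : ℝ → ℝ} {K α s : ℝ} (hα : 0 < α) (hs : 0 < s)
    (hdecay : ∀ t, s ≤ t → μ t ≤ K * μ s * (s / t) ^ α) :
    ∫⁻ t in Ioi s, ENNReal.ofReal (μ t / t) ≤ ENNReal.ofReal (K / α * μ s) := by
  have hpow_nonneg : ∀ t : ℝ, t ∈ Ioi s → 0 ≤ t ^ (-α - 1) := fun t ht =>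
    rpow_nonneg (hs.trans (mem_Ioi.1 ht)).le _
  calc ∫⁻ t in Ioi s, ENNReal.ofReal (μ t / t)
      ≤ ∫⁻ t in Ioi s, ENNReal.ofReal (K * μ s * s ^ α) * ENNReal.ofReal (t ^ (-α - 1)) := by
        refine setLIntegral_mono' measurableSet_Ioi fun t ht => ?_
        have ht₀ : 0 < t := hs.trans ht
        rw [← ENNReal.ofReal_mul' (hpow_nonneg t ht)]
        refine ENNReal.ofReal_le_ofReal ?_
        calc μ t / t ≤ K * μ s * (s / t) ^ α / t :=
              div_le_div_of_nonneg_right (hdecay t (le_of_lt ht)) ht₀.le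
          _ = K * μ s * s ^ α * t ^ (-α - 1) := by
              rw [div_rpow hs.le ht₀.le, rpow_sub_one ht₀.ne', rpow_neg ht₀.le]
              ring
    _ = ENNReal.ofReal (K * μ s * s ^ α) * ENNReal.ofReal (s ^ (-α) / α) := by
        rw [lintegral_const_mul' _ _ ENNReal.ofReal_ne_top, ← ofReal_integral_eq_lintegral_ofReal
          (integrableOn_Ioi_rpow_of_lt (by linarith) hs)
          ((ae_restrict_iff' measurableSet_Ioi).2 (ae_of_all _ hpow_nonneg)),
          integral_Ioi_rpow_of_lt (by linarith) hs, sub_add_cancel, neg_div_neg_eq]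
    _ = ENNReal.ofReal (K / α * μ s) := by
        rw [← ENNReal.ofReal_mul' (by positivity), mul_assoc, mul_div_assoc',
          ← rpow_add hs, add_neg_cancel, Real.rpow_zero]
        ring_nf

lemma lintegral_Ioo_ofReal_mul_exp_neg_mul {lam t : ℝ} (hlam : 0 ≤ lam) (ht : 0 ≤ t) :
    ∫⁻ s in Ioo 0 t, ENNReal.ofReal (lam * exp (-lam * s)) =
      ENNReal.ofReal (1 - exp (-lam * t)) := by
  have hderiv : ∀ s ∈ uIcc 0 t,
      HasDerivAt (fun s => -exp (-lam * s)) (lam * exp (-lam * s)) s := fun s _ => by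
    simpa [mul_comm, Pi.neg_def] using (((hasDerivAt_id s).const_mul (-lam)).exp).neg
  have hcont : Continuous fun s => lam * exp (-lam * s) := by fun_prop
  rw [← ofReal_integral_eq_lintegral_ofReal (hcont.integrableOn_Icc.mono_set Ioo_subset_Icc_self)
      (ae_of_all _ fun s => by positivity),
    ← integral_Ioc_eq_integral_Ioo, ← intervalIntegral.integral_of_le ht,
    intervalIntegral.integral_eq_sub_of_hasDerivAt hderiv (hcont.intervalIntegrable 0 t)]
  simp only [mul_zero, exp_zero]
  ring_nf

lemma lintegral_one_sub_exp_mul_div_le {μ : ℝ → ℝ} {C lam : ℝ} (hlam : 0 ≤ lam)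
    (hμ_meas : AEMeasurable μ (volume.restrict (Ioi 0))) (hμ_nonneg : ∀ t, 0 < t → 0 ≤ μ t)
    (htail : ∀ s, 0 < s →
      ∫⁻ t in Ioi s, ENNReal.ofReal (μ t / t) ≤ ENNReal.ofReal (C * μ s)) :
    ∫⁻ t in Ioi 0, ENNReal.ofReal ((1 - exp (-lam * t)) * μ t / t) ≤
      ENNReal.ofReal (C * lam) * ∫⁻ s in Ioi 0, ENNReal.ofReal (exp (-lam * s) * μ s) := by
  set ν := volume.restrict (Ioi (0 : ℝ))
  -- `1 - e^{-λt} = ∫₀ᵗ λ e^{-λs} ds` turns the left side into a double integral over `s < t`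
  set F : ℝ × ℝ → ENNReal := {p | p.1 < p.2}.indicator
    fun p => ENNReal.ofReal (lam * exp (-lam * p.1)) * ENNReal.ofReal (μ p.2 / p.2)
  have hF : AEMeasurable F (ν.prod ν) := by
    have hexp : Measurable fun p : ℝ × ℝ => ENNReal.ofReal (lam * exp (-lam * p.1)) := by
      fun_prop
    have hμ_snd : AEMeasurable (fun p : ℝ × ℝ => ENNReal.ofReal (μ p.2 / p.2)) (ν.prod ν) :=
      ((hμ_meas.comp_quasiMeasurePreserving Measure.quasiMeasurePreserving_snd).div
        measurable_snd.aemeasurable).ennreal_ofReal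
    exact (hexp.aemeasurable.mul hμ_snd).indicator
      (measurableSet_lt measurable_fst measurable_snd)
  have inner_s : ∀ t ∈ Ioi (0 : ℝ),
      ENNReal.ofReal ((1 - exp (-lam * t)) * μ t / t) = ∫⁻ s, F (s, t) ∂ν := by
    intro t ht
    have hslice : (fun s => F (s, t)) = (Iio t).indicator
        fun s => ENNReal.ofReal (lam * exp (-lam * s)) * ENNReal.ofReal (μ t / t) := by
      ext s
      simp only [F, Set.indicator, mem_ofPred_eq, mem_Iio]
    rw [hslice, lintegral_indicator measurableSet_Iio, Measure.restrict_restrict measurableSet_Iio,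
      Iio_inter_Ioi, lintegral_mul_const' _ _ ENNReal.ofReal_ne_top,
      lintegral_Ioo_ofReal_mul_exp_neg_mul hlam (le_of_lt ht), ← ENNReal.ofReal_mul'
        (div_nonneg (hμ_nonneg t ht) (le_of_lt ht)), mul_div_assoc]
  have inner_t : ∀ s ∈ Ioi (0 : ℝ),
      ∫⁻ t, F (s, t) ∂ν ≤ ENNReal.ofReal (C * lam) * ENNReal.ofReal (exp (-lam * s) * μ s) := by
    intro s hs
    have hslice : (fun t => F (s, t)) = (Ioi s).indicator
        fun t => ENNReal.ofReal (lam * exp (-lam * s)) * ENNReal.ofReal (μ t / t) := by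
      ext t
      simp only [F, Set.indicator, mem_ofPred_eq, mem_Ioi]
    rw [hslice, lintegral_indicator measurableSet_Ioi, Measure.restrict_restrict measurableSet_Ioi,
      inter_eq_left.2 (Ioi_subset_Ioi (le_of_lt hs)),
      lintegral_const_mul' _ _ ENNReal.ofReal_ne_top]
    calc ENNReal.ofReal (lam * exp (-lam * s)) * ∫⁻ t in Ioi s, ENNReal.ofReal (μ t / t)
        ≤ ENNReal.ofReal (lam * exp (-lam * s)) * ENNReal.ofReal (C * μ s) := by
          gcongr
          exact htail s hs
      _ = ENNReal.ofReal (C * lam) * ENNReal.ofReal (exp (-lam * s) * μ s) := by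
          rw [ENNReal.ofReal_mul' (hμ_nonneg s hs), ENNReal.ofReal_mul' hlam,
            ENNReal.ofReal_mul hlam, ENNReal.ofReal_mul (exp_pos _).le]
          ring
  calc ∫⁻ t in Ioi 0, ENNReal.ofReal ((1 - exp (-lam * t)) * μ t / t)
      = ∫⁻ t, ∫⁻ s, F (s, t) ∂ν ∂ν := setLIntegral_congr_fun measurableSet_Ioi inner_s
    _ = ∫⁻ s, ∫⁻ t, F (s, t) ∂ν ∂ν := (lintegral_lintegral_swap (f := fun s t => F (s, t)) hF).symm
    _ ≤ ∫⁻ s, ENNReal.ofReal (C * lam) * ENNReal.ofReal (exp (-lam * s) * μ s) ∂ν :=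
        setLIntegral_mono' measurableSet_Ioi inner_t
    _ = _ := lintegral_const_mul' _ _ ENNReal.ofReal_ne_top

lemma mul_exp_neg_le_one_sub_exp_neg (x : ℝ) : x * exp (-x) ≤ 1 - exp (-x) := by
  have h := mul_le_mul_of_nonneg_right (add_one_le_exp x) (exp_pos (-x)).le
  rw [← exp_add, add_neg_cancel, exp_zero] at h
  linarith

lemma integral_le_mul_integral_of_lintegral_le {X : Type*} [MeasurableSpace X] {ν : Measure X}
    {f g : X → ℝ} {c : ℝ} (hc : 0 ≤ c) (hf : 0 ≤ᵐ[ν] f) (hg : 0 ≤ᵐ[ν] g)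
    (hf_meas : AEStronglyMeasurable f ν) (hfg : Integrable f ν → Integrable g ν)
    (h : ∫⁻ x, ENNReal.ofReal (f x) ∂ν ≤ ENNReal.ofReal c * ∫⁻ x, ENNReal.ofReal (g x) ∂ν) :
    ∫ x, f x ∂ν ≤ c * ∫ x, g x ∂ν := by
  by_cases hg_int : Integrable g ν
  · rw [integral_eq_lintegral_of_nonneg_ae hf hf_meas,
      integral_eq_lintegral_of_nonneg_ae hg hg_int.aestronglyMeasurable,
      ← ENNReal.toReal_ofReal hc, ← ENNReal.toReal_mul]
    exact ENNReal.toReal_mono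
      (ENNReal.mul_ne_top ENNReal.ofReal_ne_top hg_int.lintegral_lt_top.ne) h
  · rw [integral_undef (mt hfg hg_int), integral_undef hg_int, mul_zero]

theorem integral_one_sub_exp_mul_div_le_of_decay {μ : ℝ → ℝ} {K α lam : ℝ} (hK : 0 ≤ K)
    (hα : 0 < α) (hlam : 0 < lam) (hμ_meas : AEMeasurable μ (volume.restrict (Ioi 0)))
    (hμ_nonneg : ∀ t, 0 < t → 0 ≤ μ t)
    (hdecay : ∀ s t, 0 < s → s ≤ t → μ t ≤ K * μ s * (s / t) ^ α) :
    ∫ t in Ioi 0, (1 - exp (-lam * t)) * μ t / t ≤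
      K / α * lam * ∫ s in Ioi 0, exp (-lam * s) * μ s := by
  have hexp_meas : Measurable fun t => exp (-lam * t) := by fun_prop
  have hone_sub_exp : ∀ t : ℝ, 0 < t → 0 ≤ 1 - exp (-lam * t) := fun t ht => by
    rw [sub_nonneg, exp_le_one_iff]
    nlinarith
  refine integral_le_mul_integral_of_lintegral_le (by positivity) ?_ ?_ ?_ ?_
    (lintegral_one_sub_exp_mul_div_le hlam.le hμ_meas hμ_nonneg fun s hs =>
      lintegral_Ioi_div_le_of_decay hα hs fun t hst => hdecay s t hs hst)
  · refine (ae_restrict_iff' measurableSet_Ioi).2 (ae_of_all _ fun t ht => ?_)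
    have := hμ_nonneg t ht
    have := hone_sub_exp t ht
    have : (0 : ℝ) < t := ht
    positivity
  · refine (ae_restrict_iff' measurableSet_Ioi).2 (ae_of_all _ fun s hs => ?_)
    have := hμ_nonneg s hs
    positivity
  · exact (((measurable_const.sub hexp_meas).aemeasurable.mul hμ_meas).div
      measurable_id.aemeasurable).aestronglyMeasurable
  · -- `λ e^{-λs} μ(s) ≤ (1 - e^{-λs}) μ(s) / s`, so the right integral is a junk `0`
    -- only when the left one is
    refine fun hf => (hf.const_mul lam⁻¹).mono'
      (hexp_meas.aemeasurable.mul hμ_meas).aestronglyMeasurable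
      ((ae_restrict_iff' measurableSet_Ioi).2 (ae_of_all _ fun s hs => ?_))
    have hs₀ : (0 : ℝ) < s := hs
    have key := mul_le_mul_of_nonneg_right (mul_exp_neg_le_one_sub_exp_neg (lam * s))
      (hμ_nonneg s hs)
    rw [← neg_mul] at key
    rw [norm_of_nonneg (mul_nonneg (exp_pos _).le (hμ_nonneg s hs)), le_inv_mul_iff₀ hlam,
      le_div_iff₀ hs₀]
    linarith

theorem stmt_10_general (β₁ β₂ γ₁ γ₂ : ℝ) (hβ₁ : 0 < β₁) (hβ : β₁ ≤ β₂)
    (hγ₁ : 0 < γ₁)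
    (φ ψ φinv : ℝ → ℝ) (hφ : LU β₁ β₂ φ) (hψ : LU γ₁ γ₂ ψ)
    (hinv₁ : ∀ r : ℝ, 0 ≤ r → φinv (φ r) = r)
    (hinv₂ : ∀ t : ℝ, 0 ≤ t → φ (φinv t) = t) :
    ∃ C : ℝ, 0 < C ∧ ∀ lam : ℝ, 0 < lam →
      (∫ t in Ioi (0 : ℝ), (1 - Real.exp (-lam * t)) * (ψ (φinv t))⁻¹ / t) ≤
        C * lam * ∫ s in Ioi (0 : ℝ), Real.exp (-lam * s) * (ψ (φinv s))⁻¹ := by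
  have hβ₂ : 0 < β₂ := hβ₁.trans_le hβ
  have hinv : RightInvOn φinv φ (Ici 0) := fun t ht => hinv₂ t ht
  have hmaps : MapsTo φinv (Ici 0) (Ici 0) :=
    LeftInvOn.mapsTo (fun r hr => hinv₁ r hr) (hφ.surjOn_Ici hβ₁)
  have hmaps_pos := hφ.mapsTo_Ioi_of_rightInvOn hmaps hinv
  have hmono := (hφ.monotoneOn_of_rightInvOn hmaps hinv).mono Ioi_subset_Ici_self
  obtain ⟨K, hK, hdecay⟩ := hφ.inv_comp_le_mul_rpow hψ hβ₂ hγ₁.le hmaps_pos hmono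
    (hinv.mono Ioi_subset_Ici_self)
  have hanti : AntitoneOn (fun t => (ψ (φinv t))⁻¹) (Ioi 0) := fun s hs t ht hst =>
    inv_anti₀ (hψ.pos (hmaps_pos hs)) <| hψ.2.1.monotoneOn (hmaps (Ioi_subset_Ici_self hs))
      (hmaps (Ioi_subset_Ici_self ht)) (hmono hs ht hst)
  refine ⟨K / (γ₁ / β₂), by positivity, fun lam hlam => ?_⟩
  exact integral_one_sub_exp_mul_div_le_of_decay hK.le (div_pos hγ₁ hβ₂) hlam
    (aemeasurable_restrict_of_antitoneOn measurableSet_Ioi hanti)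
    (fun t ht => (inv_pos.2 (hψ.pos (hmaps_pos ht))).le) hdecay

theorem stmt_10 (β₁ β₂ γ₁ γ₂ : ℝ) (hβ₁ : 0 < β₁) (hβ : β₁ ≤ β₂)
    (hγ₁ : 0 < γ₁) (hγ : γ₁ ≤ γ₂)
    (φ ψ φinv : ℝ → ℝ) (hφ : LU β₁ β₂ φ) (hψ : LU γ₁ γ₂ ψ)
    (hinv₁ : ∀ r : ℝ, 0 ≤ r → φinv (φ r) = r)
    (hinv₂ : ∀ t : ℝ, 0 ≤ t → φ (φinv t) = t) :
    ∃ C : ℝ, 0 < C ∧ ∀ lam : ℝ, 0 < lam →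
      (∫ t in Ioi (0 : ℝ), (1 - Real.exp (-lam * t)) * (ψ (φinv t))⁻¹ / t) ≤
        C * lam * ∫ s in Ioi (0 : ℝ), Real.exp (-lam * s) * (ψ (φinv s))⁻¹ :=
  stmt_10_general β₁ β₂ γ₁ γ₂ hβ₁ hβ hγ₁ φ ψ φinv hφ hψ hinv₁ hinv₂
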